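/- arXiv:2112.11310 — 4 statements merged into one kernel-verified Lean document; each statement's English description precedes it below -/
import Mathlib

section
/- Let X be a nonempty set and let g, g₁ ∈ G(X) with ⋏(g) > 1. Then: (i) g ≈ g^c g ≈ g g^c ≈ g g^l g ≈ g g^r g and g^r g g^l ≈ g^r g^c g^l; (ii) the classes [g g^r], [g g^l], [g^r g], [g^l g] are idempotents of FT¹(X); (iii) g₁ ≈ β₁(g₁). -/
/-! Common definitions: the construction of `G(X)`, words, the congruence `ρ`,
the monoid `FT¹(X)`, landscapes, mountains, the maps `β₁, β₂, β`, Green's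
relations, sandwich sets, etc. -/

/-- Nested triples over `X` together with the extra symbol `1`. -/
inductive PreG (X : Type) : Type where
  | one : PreG X
  | base : X → PreG X
  | node : PreG X → PreG X → PreG X → PreG X

namespace PreG

variable {X : Type}

/-- The height `⋏(g)`. -/
def ht : PreG X → ℕ
  | one => 0
  | base _ => 1
  | node l _ _ => ht l + 1

/-- The left entry `g^l` (with `1^l = 1` and `x^l = 1` for `x ∈ X`). -/
def left : PreG X → PreG X
  | one => one
  | base _ => one
  | node l _ _ => l

/-- The right entry `g^r`. -/
def right : PreG X → PreG X
  | one => one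
  | base _ => one
  | node _ _ r => r

/-- The central entry `g^c` (with `x^c = x` for `x ∈ X` via `x = (1,x,1)`). -/
def center : PreG X → PreG X
  | one => one
  | base x => base x
  | node _ c _ => c

/-- Membership in `G(X) = ⋃_{i≥0} G_i(X)`. -/
inductive IsG : PreG X → Prop
  | one : IsG one
  | base (x : X) : IsG (base x)
  | node {l c r : PreG X} :
      IsG l → IsG c → IsG r →
      1 ≤ l.ht → l.ht = r.ht → c.ht + 1 = l.ht →
      l ≠ r →
      (c = l.left ∨ c = l.right) →
      (c = r.left ∨ c = r.right) →
      IsG (node l c r)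

theorem IsG.left_isG {g : PreG X} (h : g.IsG) : g.left.IsG := by
  cases h with
  | one => exact .one
  | base x => exact .one
  | node hl hc hr h1 h2 h3 h4 h5 h6 => exact hl

theorem IsG.right_isG {g : PreG X} (h : g.IsG) : g.right.IsG := by
  cases h with
  | one => exact .one
  | base x => exact .one
  | node hl hc hr h1 h2 h3 h4 h5 h6 => exact hr

theorem IsG.center_isG {g : PreG X} (h : g.IsG) : g.center.IsG := by
  cases h with
  | one => exact .one
  | base x => exact .base x
  | node hl hc hr h1 h2 h3 h4 h5 h6 => exact hc

/-- The ground `ε(g)`. -/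
def ground : PreG X → Set (PreG X)
  | one => {one}
  | base x => {one, base x}
  | node l c r => ground l ∪ {node l c r} ∪ ground r

end PreG

/-- The set `G(X)`. -/
def Gx (X : Type) : Type := {g : PreG X // g.IsG}

namespace Gx

variable {X : Type}

/-- The letter `1`. -/
def gone : Gx X := ⟨PreG.one, .one⟩

instance : Inhabited (Gx X) := ⟨gone⟩

/-- The letter corresponding to `x ∈ X`. -/
def ofX (x : X) : Gx X := ⟨PreG.base x, .base x⟩

/-- `g^l`. -/
def l (g : Gx X) : Gx X := ⟨g.1.left, g.2.left_isG⟩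

/-- `g^c`. -/
def c (g : Gx X) : Gx X := ⟨g.1.center, g.2.center_isG⟩

/-- `g^r`. -/
def r (g : Gx X) : Gx X := ⟨g.1.right, g.2.right_isG⟩

/-- The height of `g`. -/
def ht (g : Gx X) : ℕ := g.1.ht

theorem ht_c_lt : ∀ {g : Gx X}, 2 ≤ g.ht → g.c.ht < g.ht := by
  rintro ⟨g0, hg⟩ h
  cases hg with
  | one => simp [Gx.ht, PreG.ht] at h
  | base x => simp [Gx.ht, PreG.ht] at h
  | node hl hc hr hht hlr hc1 hne hcl hcr =>
    simp only [Gx.ht, Gx.c, PreG.center, PreG.ht] at *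
    omega

/-- The step relation of an uphill: `a ∈ {b^l, b^r}` for consecutive letters `a b`. -/
def stepUp (a b : Gx X) : Prop := a = b.l ∨ a = b.r

/-- The step relation of a downhill: `b ∈ {a^l, a^r}` for consecutive letters `a b`. -/
def stepDown (a b : Gx X) : Prop := b = a.l ∨ b = a.r

/-- The left hill `λ_l(g)` of the mountain `β₁(g)`. -/
def lamL (g : Gx X) : List (Gx X) :=
  if h : 2 ≤ g.ht then lamL g.c ++ [g.l, g]
  else if g.ht = 0 then [g] else [gone, g]
termination_by g.ht
decreasing_by exact ht_c_lt h

/-- The right hill `λ_r(g)` of the mountain `β₁(g)`. -/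
def lamR (g : Gx X) : List (Gx X) :=
  if h : 2 ≤ g.ht then [g, g.r] ++ lamR g.c
  else if g.ht = 0 then [g] else [g, gone]
termination_by g.ht
decreasing_by exact ht_c_lt h

end Gx

/-- The free semigroup `G(X)⁺` on `G(X)`. -/
abbrev Wd (X : Type) := FreeSemigroup (Gx X)

namespace Wd

variable {X : Type}

/-- The one-letter word. -/
def og (g : Gx X) : Wd X := FreeSemigroup.of g

/-- The list of letters of a word. -/
def toL (w : Wd X) : List (Gx X) := w.head :: w.tail

/-- The word with a given (nonempty) list of letters. -/
def ofL (w : List (Gx X)) : Wd X := ⟨w.headI, w.tail⟩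

end Wd

/-- The generating relation `ρ_e ∪ ρ_s`. -/
def rhoBase (X : Type) : Wd X → Wd X → Prop := fun a b =>
  (∃ g : Gx X,
     (a = Wd.og Gx.gone * Wd.og g ∧ b = Wd.og g) ∨
     (a = Wd.og g * Wd.og Gx.gone ∧ b = Wd.og g) ∨
     (a = Wd.og g * Wd.og g ∧ b = Wd.og g)) ∨
  (∃ g : Gx X, 2 ≤ g.ht ∧
     ((a = Wd.og g.c * Wd.og g.l * Wd.og g ∧ b = Wd.og g) ∨
      (a = Wd.og g * Wd.og g.r * Wd.og g.c ∧ b = Wd.og g) ∨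
      (a = Wd.og g.r * Wd.og g.c * Wd.og g * Wd.og g.c * Wd.og g.l ∧
       b = Wd.og g.r * Wd.og g.c * Wd.og g.l)))

/-- The congruence `ρ`: the smallest congruence containing `ρ_e ∪ ρ_s`. -/
def rho (X : Type) : Con (Wd X) := conGen (rhoBase X)

/-- The monoid `FT¹(X) = G(X)⁺/ρ`. -/
abbrev FT1 (X : Type) := (rho X).Quotient

/-- The `ρ`-class `[u]` of a word `u`. -/
def cls {X : Type} (u : Wd X) : FT1 X := (u : FT1 X)

/-- `FT(X) = FT¹(X) ∖ {[1]}`, as a subset of `FT¹(X)`. -/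
def FTset (X : Type) : Set (FT1 X) := {a | a ≠ cls (Wd.og Gx.gone)}

section Landscapes

variable {X : Type}

/-- Landscapes (as nonempty lists of letters). -/
def IsLandL (w : List (Gx X)) : Prop :=
  w ≠ [] ∧ w.Chain' (fun a b => Gx.stepUp a b ∨ Gx.stepDown a b)

/-- Uphills. -/
def IsUphillL (w : List (Gx X)) : Prop := w ≠ [] ∧ w.Chain' Gx.stepUp

/-- Downhills. -/
def IsDownhillL (w : List (Gx X)) : Prop := w ≠ [] ∧ w.Chain' Gx.stepDown

/-- No letter is a river. -/
def RiverFreeL : List (Gx X) → Prop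
  | a :: b :: c :: t =>
      ¬(a.ht = b.ht + 1 ∧ c.ht = b.ht + 1) ∧ RiverFreeL (b :: c :: t)
  | _ => True

/-- Mountains: landscapes with endpoints `1` and no rivers. -/
def IsMountainL (w : List (Gx X)) : Prop :=
  IsLandL w ∧ w.head? = some Gx.gone ∧ w.getLast? = some Gx.gone ∧ RiverFreeL w

/-- The set `M¹(X)` of all mountains. -/
def MSet (X : Type) : Set (List (Gx X)) := {w | IsMountainL w}

/-- `u * v`: concatenation merging the repeated junction letter. -/
def mergeL (u v : List (Gx X)) : List (Gx X) := u ++ v.tail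

open Classical in
/-- The maximal initial uphill `λ_l` of a landscape. -/
noncomputable def maxUp : List (Gx X) → List (Gx X)
  | a :: b :: t => if Gx.stepUp a b then a :: maxUp (b :: t) else [a]
  | w => w

/-- The maximal final downhill `λ_r` of a landscape. -/
noncomputable def lamRL (w : List (Gx X)) : List (Gx X) := (maxUp w.reverse).reverse

/-- The peak `κ` of a mountain. -/
noncomputable def peakL (w : List (Gx X)) : Gx X := (maxUp w).getLast?.getD Gx.gone

/-- `β₁` on a letter: the mountain `λ_l(g) * λ_r(g)`. -/
def beta1g (g : Gx X) : List (Gx X) := mergeL (Gx.lamL g) (Gx.lamR g)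

/-- `β₁` on a word: `β₁(g₀) * ⋯ * β₁(g_n)`. -/
def beta1L : List (Gx X) → List (Gx X)
  | [] => []
  | [g] => beta1g g
  | g :: t => mergeL (beta1g g) (beta1L t)

/-- One uplifting of a river. -/
def UpStep (u v : List (Gx X)) : Prop :=
  ∃ (p s : List (Gx X)) (a b c : Gx X),
    u = p ++ a :: b :: c :: s ∧ a.ht = b.ht + 1 ∧ c.ht = b.ht + 1 ∧
    ((a = c ∧ v = p ++ a :: s) ∨
     (a ≠ c ∧ ∃ d : Gx X, d.1 = PreG.node c.1 b.1 a.1 ∧ v = p ++ a :: d :: c :: s))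

/-- The reflexive and transitive closure `→*` of uplifting of rivers. -/
def UpStar : List (Gx X) → List (Gx X) → Prop := Relation.ReflTransGen UpStep

open Classical in
/-- `β₂(u)`: the unique landscape with no rivers reachable from `u` by
upliftings of rivers. -/
noncomputable def beta2L (u : List (Gx X)) : List (Gx X) :=
  if h : ∃ v, UpStar u v ∧ RiverFreeL v ∧ IsLandL v then h.choose else u

/-- `β(u) = β₂(β₁(u))`. -/
noncomputable def betaL (u : List (Gx X)) : List (Gx X) := beta2L (beta1L u)

/-- The operation `⊙` on mountains: `u ⊙ v = β₂(u * v)`. -/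
noncomputable def odotL (u v : List (Gx X)) : List (Gx X) := beta2L (mergeL u v)

/-- Valleys: a downhill followed by an uphill (junction merged). -/
def IsValleyL (w : List (Gx X)) : Prop :=
  ∃ d u : List (Gx X), IsDownhillL d ∧ IsUphillL u ∧ d.getLast? = u.head? ∧
    w = mergeL d u

/-- Canyons: valleys with equal endpoints. -/
def IsCanyonL (w : List (Gx X)) : Prop := IsValleyL w ∧ w.head? = w.getLast?

/-- Gorges: canyons `w` with `w →* σ(w)`. -/
def IsGorgeL (w : List (Gx X)) : Prop :=
  IsCanyonL w ∧ ∃ a, w.head? = some a ∧ UpStar w [a]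

end Landscapes

section Green

variable {X : Type}

/-- `a ≤_R b`. -/
def leR (a b : FT1 X) : Prop := ∃ m, a = b * m

/-- `a ≤_L b`. -/
def leL (a b : FT1 X) : Prop := ∃ m, a = m * b

/-- `a ≤_J b`. -/
def leJ (a b : FT1 X) : Prop := ∃ m n, a = m * b * n

/-- The right ideal `aM`. -/
def rSet (a : FT1 X) : Set (FT1 X) := {x | ∃ m, x = a * m}

/-- The left ideal `Ma`. -/
def lSet (a : FT1 X) : Set (FT1 X) := {x | ∃ m, x = m * a}

/-- The two-sided ideal `MaM`. -/
def jSet (a : FT1 X) : Set (FT1 X) := {x | ∃ m n, x = m * a * n}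

/-- Green's relation `R`. -/
def GreenR (a b : FT1 X) : Prop := rSet a = rSet b

/-- Green's relation `L`. -/
def GreenL (a b : FT1 X) : Prop := lSet a = lSet b

/-- Green's relation `J`. -/
def GreenJ (a b : FT1 X) : Prop := jSet a = jSet b

/-- Green's relation `H = L ∩ R`. -/
def GreenH (a b : FT1 X) : Prop := GreenR a b ∧ GreenL a b

/-- Green's relation `D = L ∨ R` (join as equivalence relations). -/
def GreenD : FT1 X → FT1 X → Prop :=
  Relation.EqvGen (fun a b => GreenL a b ∨ GreenR a b)

/-- The natural partial order on a regular semigroup: `s ≤ t` iff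
`s = et = tf` for some idempotents `e`, `f`. -/
def natLe (s t : FT1 X) : Prop :=
  ∃ e f : FT1 X, e * e = e ∧ f * f = f ∧ s = e * t ∧ s = t * f

end Green

/-- The sandwich set `S(e, f)`. -/
def sandwich {S : Type*} [Mul S] (e f : S) : Set S :=
  {h | h * h = h ∧ f * h = h ∧ h * e = h ∧ e * h * f = e * f}

/-- Skeleton mappings `φ : G(X) → E(S¹)`. -/
def IsSkeletonMap {X : Type} {S : Type} [Semigroup S] (φ : Gx X → WithOne S) : Prop :=
  (Function.Injective fun x : X => φ (Gx.ofX x)) ∧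
  (∀ x : X, ∃ s : S, s * s = s ∧ φ (Gx.ofX x) = (s : WithOne S)) ∧
  (∀ g : Gx X, φ g * φ g = φ g) ∧
  (∀ g : Gx X, g.ht = 1 → φ Gx.gone * φ g = φ g ∧ φ g * φ Gx.gone = φ g) ∧
  (∀ g : Gx X, 2 ≤ g.ht → φ g ∈ sandwich (φ g.r * φ g.c) (φ g.c * φ g.l))

/-! By the defining relations, each letter `[g]` of height at least two lies in the sandwich set
`S([g^r][g^c], [g^c][g^l])` of `FT¹(X)`, with `[g^c]` idempotent. Parts (i) and (ii) follow from
this alone, by computations valid in any semigroup. For (iii), the relations `g^c g^l g ≈ g` and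
`g g^r g^c ≈ g` collapse the hills `λ_l(g)` and `λ_r(g)` to their common letter `g` by induction
on the height, so their merge collapses to `g` as well. -/

section Semigroup

variable {S : Type*} [Semigroup S] {a b g l c r : S}

theorem isIdempotentElem_mul_of_mul_mul_eq_self (h : a * b * a = a) :
    IsIdempotentElem (a * b) := by
  rw [IsIdempotentElem, ← mul_assoc, h]

theorem isIdempotentElem_mul_of_mul_mul_eq_self' (h : a * b * a = a) :
    IsIdempotentElem (b * a) := by
  rw [IsIdempotentElem, mul_assoc, ← mul_assoc a, h]

theorem center_mul_eq_of_mem_sandwich (hc : IsIdempotentElem c)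
    (hg : g ∈ sandwich (r * c) (c * l)) : c * g = g :=
  calc c * g = c * (c * l * g) := by rw [hg.2.1]
    _ = c * c * l * g := by simp only [mul_assoc]
    _ = g := by rw [hc.eq, hg.2.1]

theorem mul_center_eq_of_mem_sandwich (hc : IsIdempotentElem c)
    (hg : g ∈ sandwich (r * c) (c * l)) : g * c = g :=
  calc g * c = g * (r * c) * c := by rw [hg.2.2.1]
    _ = g * (r * (c * c)) := by simp only [mul_assoc]
    _ = g := by rw [hc.eq, hg.2.2.1]

theorem mul_left_mul_eq_of_mem_sandwich (hc : IsIdempotentElem c)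
    (hg : g ∈ sandwich (r * c) (c * l)) : g * l * g = g := by
  obtain ⟨hgg, hclg, hgrc, hrcgcl⟩ := hg
  calc g * l * g = g * (r * c) * l * g := by rw [hgrc]
    _ = g * (r * c * (c * l)) * g := by
          rw [← mul_assoc (r * c) c l, mul_assoc r c c, hc.eq]; simp only [mul_assoc]
    _ = g * (r * c * g * (c * l)) * g := by rw [hrcgcl]
    _ = g * (r * c) * g * (c * l * g) := by simp only [mul_assoc]
    _ = g := by rw [hgrc, hclg, hgg, hgg]

theorem mul_right_mul_eq_of_mem_sandwich (hc : IsIdempotentElem c)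
    (hg : g ∈ sandwich (r * c) (c * l)) : g * r * g = g :=
  calc g * r * g = g * r * (c * l * g) := by rw [hg.2.1]
    _ = g * (r * c) * l * g := by simp only [mul_assoc]
    _ = g := by rw [hg.2.2.1, mul_left_mul_eq_of_mem_sandwich hc hg]

theorem right_mul_left_eq_of_mem_sandwich (hc : IsIdempotentElem c)
    (hg : g ∈ sandwich (r * c) (c * l)) : r * g * l = r * c * l :=
  calc r * g * l = r * (c * (g * c)) * l := by
          rw [mul_center_eq_of_mem_sandwich hc hg, center_mul_eq_of_mem_sandwich hc hg]
    _ = r * c * g * (c * l) := by simp only [mul_assoc]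
    _ = r * c * (c * l) := hg.2.2.2
    _ = r * c * l := by rw [← mul_assoc, mul_assoc r c c, hc.eq]

end Semigroup

section Letters

variable {X : Type}

theorem cls_mul (u v : Wd X) : cls (u * v) = cls u * cls v := rfl

theorem cls_eq_of_rhoBase {u v : Wd X} (h : rhoBase X u v) : cls u = cls v :=
  (rho X).eq.2 (ConGen.Rel.of _ _ h)

theorem one_mul_letter (g : Gx X) : cls (Wd.og Gx.gone) * cls (Wd.og g) = cls (Wd.og g) :=
  cls_eq_of_rhoBase (.inl ⟨g, .inl ⟨rfl, rfl⟩⟩)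

theorem letter_mul_one (g : Gx X) : cls (Wd.og g) * cls (Wd.og Gx.gone) = cls (Wd.og g) :=
  cls_eq_of_rhoBase (.inl ⟨g, .inr (.inl ⟨rfl, rfl⟩)⟩)

theorem isIdempotentElem_letter (g : Gx X) : IsIdempotentElem (cls (Wd.og g)) :=
  cls_eq_of_rhoBase (.inl ⟨g, .inr (.inr ⟨rfl, rfl⟩)⟩)

theorem center_mul_left_mul_letter {g : Gx X} (hg : 2 ≤ g.ht) :
    cls (Wd.og g.c) * cls (Wd.og g.l) * cls (Wd.og g) = cls (Wd.og g) :=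
  cls_eq_of_rhoBase (.inr ⟨g, hg, .inl ⟨rfl, rfl⟩⟩)

theorem letter_mul_right_mul_center {g : Gx X} (hg : 2 ≤ g.ht) :
    cls (Wd.og g) * cls (Wd.og g.r) * cls (Wd.og g.c) = cls (Wd.og g) :=
  cls_eq_of_rhoBase (.inr ⟨g, hg, .inr (.inl ⟨rfl, rfl⟩)⟩)

theorem right_mul_center_mul_letter_mul_center_mul_left {g : Gx X} (hg : 2 ≤ g.ht) :
    cls (Wd.og g.r) * cls (Wd.og g.c) * cls (Wd.og g) * cls (Wd.og g.c) * cls (Wd.og g.l) =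
      cls (Wd.og g.r) * cls (Wd.og g.c) * cls (Wd.og g.l) :=
  cls_eq_of_rhoBase (.inr ⟨g, hg, .inr (.inr ⟨rfl, rfl⟩)⟩)

theorem letter_mem_sandwich {g : Gx X} (hg : 2 ≤ g.ht) :
    cls (Wd.og g) ∈ sandwich (cls (Wd.og g.r) * cls (Wd.og g.c))
      (cls (Wd.og g.c) * cls (Wd.og g.l)) := by
  refine ⟨isIdempotentElem_letter g, center_mul_left_mul_letter hg,
    letter_mul_right_mul_center hg, ?_⟩
  calc _ = cls (Wd.og g.r) * cls (Wd.og g.c) * cls (Wd.og g) * cls (Wd.og g.c) *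
        cls (Wd.og g.l) := by simp only [mul_assoc]
    _ = cls (Wd.og g.r) * (cls (Wd.og g.c) * cls (Wd.og g.c)) * cls (Wd.og g.l) := by
        rw [right_mul_center_mul_letter_mul_center_mul_left hg, (isIdempotentElem_letter _).eq]
    _ = _ := by simp only [mul_assoc]

end Letters

section Beta1

variable {X : Type}

theorem Wd.ofL_append {u v : List (Gx X)} (hu : u ≠ []) (hv : v ≠ []) :
    Wd.ofL (u ++ v) = Wd.ofL u * Wd.ofL v := by
  obtain ⟨a, u, rfl⟩ := List.exists_cons_of_ne_nil hu
  obtain ⟨b, v, rfl⟩ := List.exists_cons_of_ne_nil hv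
  rfl

theorem Wd.ofL_singleton (a : Gx X) : Wd.ofL [a] = Wd.og a := rfl

theorem Wd.ofL_cons (a : Gx X) {t : List (Gx X)} (ht : t ≠ []) :
    Wd.ofL (a :: t) = Wd.og a * Wd.ofL t :=
  Wd.ofL_append (List.cons_ne_nil a []) ht

theorem Gx.lamL_ne_nil (g : Gx X) : Gx.lamL g ≠ [] := by
  rw [Gx.lamL]
  split
  · simp
  · split <;> simp

theorem Gx.exists_lamR_eq_cons (g : Gx X) : ∃ t, Gx.lamR g = g :: t := by
  rw [Gx.lamR]
  split
  · exact ⟨_, rfl⟩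
  · split
    · exact ⟨[], rfl⟩
    · exact ⟨[Gx.gone], rfl⟩

theorem cls_ofL_lamL (g : Gx X) : cls (Wd.ofL (Gx.lamL g)) = cls (Wd.og g) := by
  rw [Gx.lamL]
  split
  case isTrue hg =>
    rw [Wd.ofL_append g.c.lamL_ne_nil (List.cons_ne_nil _ _),
      Wd.ofL_cons _ (List.cons_ne_nil _ _), Wd.ofL_singleton, cls_mul, cls_mul,
      cls_ofL_lamL g.c, ← mul_assoc]
    exact center_mul_left_mul_letter hg
  case isFalse =>
    split
    · rfl
    · exact one_mul_letter g
termination_by g.ht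
decreasing_by exact Gx.ht_c_lt (by assumption)

theorem cls_ofL_lamR (g : Gx X) : cls (Wd.ofL (Gx.lamR g)) = cls (Wd.og g) := by
  rw [Gx.lamR]
  split
  case isTrue hg =>
    obtain ⟨t, ht⟩ := g.c.exists_lamR_eq_cons
    rw [Wd.ofL_append (List.cons_ne_nil _ _) (ht ▸ List.cons_ne_nil _ _),
      Wd.ofL_cons _ (List.cons_ne_nil _ _), Wd.ofL_singleton, cls_mul, cls_mul,
      cls_ofL_lamR g.c]
    exact letter_mul_right_mul_center hg
  case isFalse =>
    split
    · rfl
    · exact letter_mul_one g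
termination_by g.ht
decreasing_by exact Gx.ht_c_lt (by assumption)

theorem cls_ofL_append_tail {a : Gx X} {u t : List (Gx X)} (hu_ne : u ≠ [])
    (hu : cls (Wd.ofL u) = cls (Wd.og a)) (ht : cls (Wd.ofL (a :: t)) = cls (Wd.og a)) :
    cls (Wd.ofL (u ++ t)) = cls (Wd.og a) := by
  rcases eq_or_ne t [] with rfl | ht_ne
  · rwa [List.append_nil]
  · rwa [Wd.ofL_append hu_ne ht_ne, cls_mul, hu, ← cls_mul, ← Wd.ofL_cons a ht_ne]

theorem cls_ofL_beta1g (g : Gx X) : cls (Wd.ofL (beta1g g)) = cls (Wd.og g) := by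
  obtain ⟨t, ht⟩ := g.exists_lamR_eq_cons
  have hR := cls_ofL_lamR g
  rw [ht] at hR
  rw [beta1g, mergeL, ht, List.tail_cons]
  exact cls_ofL_append_tail g.lamL_ne_nil (cls_ofL_lamL g) hR

end Beta1

theorem statement0_general {X : Type} (g g₁ : Gx X) (hg : 1 < g.ht) :
    (cls (Wd.og g.c * Wd.og g) = cls (Wd.og g) ∧
     cls (Wd.og g * Wd.og g.c) = cls (Wd.og g) ∧
     cls (Wd.og g * Wd.og g.l * Wd.og g) = cls (Wd.og g) ∧
     cls (Wd.og g * Wd.og g.r * Wd.og g) = cls (Wd.og g) ∧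
     cls (Wd.og g.r * Wd.og g * Wd.og g.l) = cls (Wd.og g.r * Wd.og g.c * Wd.og g.l)) ∧
    (cls (Wd.og g * Wd.og g.r) * cls (Wd.og g * Wd.og g.r) = cls (Wd.og g * Wd.og g.r) ∧
     cls (Wd.og g * Wd.og g.l) * cls (Wd.og g * Wd.og g.l) = cls (Wd.og g * Wd.og g.l) ∧
     cls (Wd.og g.r * Wd.og g) * cls (Wd.og g.r * Wd.og g) = cls (Wd.og g.r * Wd.og g) ∧
     cls (Wd.og g.l * Wd.og g) * cls (Wd.og g.l * Wd.og g) = cls (Wd.og g.l * Wd.og g)) ∧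
    cls (Wd.ofL (beta1g g₁)) = cls (Wd.og g₁) := by
  have hc := isIdempotentElem_letter g.c
  have hs := letter_mem_sandwich hg
  have hglg := mul_left_mul_eq_of_mem_sandwich hc hs
  have hgrg := mul_right_mul_eq_of_mem_sandwich hc hs
  simp only [cls_mul]
  exact ⟨⟨center_mul_eq_of_mem_sandwich hc hs, mul_center_eq_of_mem_sandwich hc hs, hglg, hgrg,
      right_mul_left_eq_of_mem_sandwich hc hs⟩,
    ⟨isIdempotentElem_mul_of_mul_mul_eq_self hgrg, isIdempotentElem_mul_of_mul_mul_eq_self hglg,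
      isIdempotentElem_mul_of_mul_mul_eq_self' hgrg,
      isIdempotentElem_mul_of_mul_mul_eq_self' hglg⟩,
    cls_ofL_beta1g g₁⟩

theorem statement0 {X : Type} [Nonempty X] (g g₁ : Gx X) (hg : 1 < g.ht) :
    (cls (Wd.og g.c * Wd.og g) = cls (Wd.og g) ∧
     cls (Wd.og g * Wd.og g.c) = cls (Wd.og g) ∧
     cls (Wd.og g * Wd.og g.l * Wd.og g) = cls (Wd.og g) ∧
     cls (Wd.og g * Wd.og g.r * Wd.og g) = cls (Wd.og g) ∧
     cls (Wd.og g.r * Wd.og g * Wd.og g.l) = cls (Wd.og g.r * Wd.og g.c * Wd.og g.l)) ∧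
    (cls (Wd.og g * Wd.og g.r) * cls (Wd.og g * Wd.og g.r) = cls (Wd.og g * Wd.og g.r) ∧
     cls (Wd.og g * Wd.og g.l) * cls (Wd.og g * Wd.og g.l) = cls (Wd.og g * Wd.og g.l) ∧
     cls (Wd.og g.r * Wd.og g) * cls (Wd.og g.r * Wd.og g) = cls (Wd.og g.r * Wd.og g) ∧
     cls (Wd.og g.l * Wd.og g) * cls (Wd.og g.l * Wd.og g) = cls (Wd.og g.l * Wd.og g)) ∧
    cls (Wd.ofL (beta1g g₁)) = cls (Wd.og g₁) :=
  statement0_general g g₁ hg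
end

section
/- For every word u ∈ G(X)^+, β(u) is a mountain and β(u) ≈ u, i.e. [β(u)] = [u] in FT¹(X). -/
/-!
Both halves of `β` only replace factors of a word by `ρ`-equivalent ones. The mountain `β₁(g)`
collapses back to `g` through `g^c g^l g ≈ g` and `g g^r g^c ≈ g`. Removing a river `b` of
`a b a` uses `a b a ≈ a` for `b ∈ {a^l, a^r}`, and replacing a river `b` of `a b c` by `d = (c, b, a)`
uses `a b c ≈ a d c`; both follow from the three relations of `ρ_s`.

Upliftings keep the landscape property and the end letters `1`, so a river-free result is a
mountain. One is reached from `β₁(u)`: in a landscape starting at `1` every height is below the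
length, upliftings never lengthen the word, and each one deletes two letters or raises one by two,
so `∑ (N - ⋏(g))` strictly decreases for `N` the initial length.
-/

namespace Gx

variable {X : Type}

theorem eq_gone_of_ht_eq_zero : ∀ {g : Gx X}, g.ht = 0 → g = gone
  | ⟨_, .one⟩, _ => rfl
  | ⟨_, .base _⟩, h => nomatch h
  | ⟨_, .node ..⟩, h => nomatch h

theorem ht_l_add_one : ∀ {g : Gx X}, 1 ≤ g.ht → g.l.ht + 1 = g.ht
  | ⟨_, .one⟩, h => nomatch h
  | ⟨_, .base _⟩, _ => rfl
  | ⟨_, .node ..⟩, _ => rfl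

theorem ht_r_add_one : ∀ {g : Gx X}, 1 ≤ g.ht → g.r.ht + 1 = g.ht
  | ⟨_, .one⟩, h => nomatch h
  | ⟨_, .base _⟩, _ => rfl
  | ⟨_, .node _ _ _ _ hlr _ _ _ _⟩, _ => congrArg (· + 1) hlr.symm

theorem stepUp_c_l : ∀ {g : Gx X}, 2 ≤ g.ht → stepUp g.c g.l
  | ⟨_, .one⟩, h => nomatch h
  | ⟨_, .base _⟩, h => nomatch h
  | ⟨_, .node _ _ _ _ _ _ _ hcl _⟩, _ => hcl.imp Subtype.ext Subtype.ext

theorem stepDown_r_c : ∀ {g : Gx X}, 2 ≤ g.ht → stepDown g.r g.c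
  | ⟨_, .one⟩, h => nomatch h
  | ⟨_, .base _⟩, h => nomatch h
  | ⟨_, .node _ _ _ _ _ _ _ _ hcr⟩, _ => hcr.imp Subtype.ext Subtype.ext

theorem stepUp.ht_le {a b : Gx X} (h : stepUp a b) : a.ht ≤ b.ht ∧ b.ht ≤ a.ht + 1 := by
  rcases Nat.eq_zero_or_pos b.ht with hb | hb
  · obtain rfl := eq_gone_of_ht_eq_zero hb
    rcases h with rfl | rfl <;> exact ⟨le_rfl, Nat.le_succ _⟩
  · rcases h with rfl | rfl
    · have := ht_l_add_one hb; omega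
    · have := ht_r_add_one hb; omega

def stepLand (a b : Gx X) : Prop := stepUp a b ∨ stepDown a b

theorem stepLand.ht_le {a b : Gx X} (h : stepLand a b) : b.ht ≤ a.ht + 1 := by
  rcases h with h | h
  · exact h.ht_le.2
  · have : stepUp b a := h
    have := this.ht_le.1
    omega

theorem stepLand.stepDown_of_ht_eq {a b : Gx X} (h : stepLand a b) (hab : a.ht = b.ht + 1) :
    stepDown a b :=
  h.resolve_left fun hu => by have := hu.ht_le.1; omega

theorem stepLand.stepUp_of_ht_eq {a b : Gx X} (h : stepLand a b) (hab : b.ht = a.ht + 1) :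
    stepUp a b :=
  h.resolve_right fun hd => by have := (show stepUp b a from hd).ht_le.1; omega

theorem exists_val_eq_node {a b c : Gx X} (hac : a ≠ c) (ha : a.ht = b.ht + 1)
    (hc : c.ht = b.ht + 1) (hba : stepDown a b) (hbc : stepUp b c) :
    ∃ d : Gx X, d.1 = PreG.node c.1 b.1 a.1 :=
  ⟨⟨_, .node c.2 b.2 a.2 (by change 1 ≤ c.ht; omega) (by change c.ht = a.ht; omega)
    (by change b.ht + 1 = c.ht; omega) (fun h => hac (Subtype.ext h).symm)
    (hbc.imp (congrArg Subtype.val) (congrArg Subtype.val))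
    (hba.imp (congrArg Subtype.val) (congrArg Subtype.val))⟩, rfl⟩

section Node

variable {a b c d : Gx X}

theorem l_eq_of_val_eq_node (hd : d.1 = PreG.node c.1 b.1 a.1) : d.l = c :=
  Subtype.ext (by simp [l, hd, PreG.left])

theorem c_eq_of_val_eq_node (hd : d.1 = PreG.node c.1 b.1 a.1) : d.c = b :=
  Subtype.ext (by simp [Gx.c, hd, PreG.center])

theorem r_eq_of_val_eq_node (hd : d.1 = PreG.node c.1 b.1 a.1) : d.r = a :=
  Subtype.ext (by simp [r, hd, PreG.right])

theorem ht_eq_of_val_eq_node (hd : d.1 = PreG.node c.1 b.1 a.1) : d.ht = c.ht + 1 := by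
  simp [ht, hd, PreG.ht]

end Node

def toFT1 (g : Gx X) : FT1 X := cls (Wd.og g)

theorem cls_eq_of_rhoBase {u v : Wd X} (h : rhoBase X u v) : cls u = cls v :=
  (Con.eq _).2 (ConGen.Rel.of _ _ h)

theorem gone_toFT1_mul (g : Gx X) : gone.toFT1 * g.toFT1 = g.toFT1 :=
  cls_eq_of_rhoBase (.inl ⟨g, .inl ⟨rfl, rfl⟩⟩)

theorem toFT1_mul_gone (g : Gx X) : g.toFT1 * gone.toFT1 = g.toFT1 :=
  cls_eq_of_rhoBase (.inl ⟨g, .inr (.inl ⟨rfl, rfl⟩)⟩)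

theorem toFT1_mul_self (g : Gx X) : g.toFT1 * g.toFT1 = g.toFT1 :=
  cls_eq_of_rhoBase (.inl ⟨g, .inr (.inr ⟨rfl, rfl⟩)⟩)

section Relations

variable {g : Gx X}

theorem c_toFT1_mul_l_mul_self (hg : 2 ≤ g.ht) :
    g.c.toFT1 * g.l.toFT1 * g.toFT1 = g.toFT1 :=
  cls_eq_of_rhoBase (.inr ⟨g, hg, .inl ⟨rfl, rfl⟩⟩)

theorem toFT1_mul_r_mul_c (hg : 2 ≤ g.ht) : g.toFT1 * g.r.toFT1 * g.c.toFT1 = g.toFT1 :=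
  cls_eq_of_rhoBase (.inr ⟨g, hg, .inr (.inl ⟨rfl, rfl⟩)⟩)

theorem r_toFT1_mul_c_mul_self_mul_c_mul_l (hg : 2 ≤ g.ht) :
    g.r.toFT1 * g.c.toFT1 * g.toFT1 * g.c.toFT1 * g.l.toFT1 =
      g.r.toFT1 * g.c.toFT1 * g.l.toFT1 :=
  cls_eq_of_rhoBase (.inr ⟨g, hg, .inr (.inr ⟨rfl, rfl⟩)⟩)

theorem c_toFT1_mul_self (hg : 2 ≤ g.ht) : g.c.toFT1 * g.toFT1 = g.toFT1 :=
  calc g.c.toFT1 * g.toFT1 = g.c.toFT1 * (g.c.toFT1 * g.l.toFT1 * g.toFT1) := by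
        rw [c_toFT1_mul_l_mul_self hg]
    _ = g.c.toFT1 * g.l.toFT1 * g.toFT1 := by simp only [← mul_assoc, toFT1_mul_self]
    _ = g.toFT1 := c_toFT1_mul_l_mul_self hg

theorem toFT1_mul_c (hg : 2 ≤ g.ht) : g.toFT1 * g.c.toFT1 = g.toFT1 :=
  calc g.toFT1 * g.c.toFT1 = g.toFT1 * g.r.toFT1 * g.c.toFT1 * g.c.toFT1 := by
        rw [toFT1_mul_r_mul_c hg]
    _ = g.toFT1 * g.r.toFT1 * g.c.toFT1 := by rw [mul_assoc _ g.c.toFT1, toFT1_mul_self]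
    _ = g.toFT1 := toFT1_mul_r_mul_c hg

theorem r_toFT1_mul_c_mul_l (hg : 2 ≤ g.ht) :
    g.r.toFT1 * g.c.toFT1 * g.l.toFT1 = g.r.toFT1 * g.toFT1 * g.l.toFT1 := by
  rw [← r_toFT1_mul_c_mul_self_mul_c_mul_l hg, mul_assoc g.r.toFT1, c_toFT1_mul_self hg,
    mul_assoc g.r.toFT1, toFT1_mul_c hg]

theorem toFT1_mul_r_mul_self (hg : 2 ≤ g.ht) : g.toFT1 * g.r.toFT1 * g.toFT1 = g.toFT1 :=
  calc g.toFT1 * g.r.toFT1 * g.toFT1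
      = g.toFT1 * g.r.toFT1 * (g.c.toFT1 * g.l.toFT1 * g.toFT1) := by
        rw [c_toFT1_mul_l_mul_self hg]
    _ = g.toFT1 * (g.r.toFT1 * g.c.toFT1 * g.l.toFT1) * g.toFT1 := by simp only [mul_assoc]
    _ = g.toFT1 * (g.r.toFT1 * g.c.toFT1 * g.toFT1 * g.c.toFT1 * g.l.toFT1) * g.toFT1 := by
        rw [r_toFT1_mul_c_mul_self_mul_c_mul_l hg]
    _ = (g.toFT1 * g.r.toFT1 * g.c.toFT1) * g.toFT1 * (g.c.toFT1 * g.l.toFT1 * g.toFT1) := by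
        simp only [mul_assoc]
    _ = g.toFT1 := by
        rw [toFT1_mul_r_mul_c hg, c_toFT1_mul_l_mul_self hg, toFT1_mul_self, toFT1_mul_self]

theorem toFT1_mul_l_mul_self (hg : 2 ≤ g.ht) : g.toFT1 * g.l.toFT1 * g.toFT1 = g.toFT1 :=
  calc g.toFT1 * g.l.toFT1 * g.toFT1
      = g.toFT1 * g.r.toFT1 * g.c.toFT1 * g.l.toFT1 * g.toFT1 := by rw [toFT1_mul_r_mul_c hg]
    _ = g.toFT1 * g.r.toFT1 * (g.c.toFT1 * g.l.toFT1 * g.toFT1) := by simp only [mul_assoc]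
    _ = g.toFT1 := by rw [c_toFT1_mul_l_mul_self hg, toFT1_mul_r_mul_self hg]

end Relations

theorem toFT1_mul_mul_self_of_stepDown {a b : Gx X} (h : stepDown a b) (hab : a.ht = b.ht + 1) :
    a.toFT1 * b.toFT1 * a.toFT1 = a.toFT1 := by
  by_cases ha : 2 ≤ a.ht
  · rcases h with rfl | rfl
    · exact toFT1_mul_l_mul_self ha
    · exact toFT1_mul_r_mul_self ha
  · rw [eq_gone_of_ht_eq_zero (show b.ht = 0 by omega), toFT1_mul_gone, toFT1_mul_self]

theorem toFT1_mul_mul_of_val_eq_node {a b c d : Gx X} (hd : d.1 = PreG.node c.1 b.1 a.1)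
    (hc : 1 ≤ c.ht) : a.toFT1 * d.toFT1 * c.toFT1 = a.toFT1 * b.toFT1 * c.toFT1 := by
  have hd2 : 2 ≤ d.ht := by rw [ht_eq_of_val_eq_node hd]; omega
  have := r_toFT1_mul_c_mul_l hd2
  rwa [l_eq_of_val_eq_node hd, c_eq_of_val_eq_node hd, r_eq_of_val_eq_node hd, eq_comm] at this

end Gx

section Words

variable {X : Type}

/-- `FT1 X` is only a semigroup: the empty list is sent to `[1]`, an identity on all classes, so
that `listCls` still turns `++` into multiplication. -/
def listCls (w : List (Gx X)) : FT1 X := w.foldr (fun g x => g.toFT1 * x) Gx.gone.toFT1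

theorem listCls_cons (g : Gx X) (w : List (Gx X)) : listCls (g :: w) = g.toFT1 * listCls w :=
  rfl

theorem gone_toFT1_mul_listCls (w : List (Gx X)) : Gx.gone.toFT1 * listCls w = listCls w := by
  cases w with
  | nil => exact Gx.toFT1_mul_self _
  | cons g w => rw [listCls_cons, ← mul_assoc, Gx.gone_toFT1_mul]

theorem listCls_singleton (g : Gx X) : listCls [g] = g.toFT1 := Gx.toFT1_mul_gone g

theorem listCls_append (u v : List (Gx X)) : listCls (u ++ v) = listCls u * listCls v := by
  induction u with
  | nil => exact (gone_toFT1_mul_listCls v).symm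
  | cons g u ih => rw [List.cons_append, listCls_cons, listCls_cons, ih, mul_assoc]

theorem cls_ofL : ∀ {w : List (Gx X)}, w ≠ [] → cls (Wd.ofL w) = listCls w
  | [g], _ => (listCls_singleton g).symm
  | g :: h :: w, _ => by
    change g.toFT1 * cls (Wd.ofL (h :: w)) = _
    rw [cls_ofL (List.cons_ne_nil h w), ← listCls_cons]

theorem listCls_mergeL {u v : List (Gx X)} (h : u.getLast? = v.head?) (hv : v ≠ []) :
    listCls (mergeL u v) = listCls u * listCls v := by
  obtain ⟨x, t, rfl⟩ := List.exists_cons_of_ne_nil hv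
  obtain ⟨u, rfl⟩ := List.getLast?_eq_some_iff.1 h
  rw [mergeL, List.tail_cons, listCls_append, listCls_append, listCls_singleton, listCls_cons]
  rw [mul_assoc, mul_assoc, ← mul_assoc x.toFT1 x.toFT1, Gx.toFT1_mul_self]

theorem head?_mergeL {u : List (Gx X)} (v : List (Gx X)) (hu : u ≠ []) :
    (mergeL u v).head? = u.head? :=
  List.head?_append_of_ne_nil u hu

theorem getLast?_mergeL {u v : List (Gx X)} (h : u.getLast? = v.head?) :
    (mergeL u v).getLast? = v.getLast? := by
  cases v with
  | nil => simpa [mergeL] using h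
  | cons x t =>
    cases t with
    | nil => simpa [mergeL] using h
    | cons y t => exact List.getLast?_append_of_ne_nil u (List.cons_ne_nil y t)

theorem IsLandL.isChain {w : List (Gx X)} (hw : IsLandL w) : w.IsChain Gx.stepLand := hw.2

theorem IsLandL.mergeL {u v : List (Gx X)} (hu : IsLandL u) (hv : IsLandL v)
    (h : u.getLast? = v.head?) : IsLandL (mergeL u v) := by
  obtain ⟨x, t, rfl⟩ := List.exists_cons_of_ne_nil hv.1
  obtain ⟨u, rfl⟩ := List.getLast?_eq_some_iff.1 h
  refine ⟨by simp [_root_.mergeL], ?_⟩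
  rw [_root_.mergeL, List.tail_cons, List.append_assoc, List.singleton_append]
  exact List.isChain_split.2 ⟨hu.2, hv.2⟩

def IsMountainRangeL (w : List (Gx X)) : Prop :=
  IsLandL w ∧ w.head? = some Gx.gone ∧ w.getLast? = some Gx.gone

theorem IsMountainRangeL.mergeL {u v : List (Gx X)} (hu : IsMountainRangeL u)
    (hv : IsMountainRangeL v) : IsMountainRangeL (mergeL u v) :=
  have h : u.getLast? = v.head? := hu.2.2.trans hv.2.1.symm
  ⟨hu.1.mergeL hv.1 h, (head?_mergeL v hu.1.1).trans hu.2.1, (getLast?_mergeL h).trans hv.2.2⟩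

end Words

namespace Gx

variable {X : Type}

theorem l_eq_gone_of_ht_eq_one {g : Gx X} (h : g.ht = 1) : g.l = gone :=
  eq_gone_of_ht_eq_zero (by have := ht_l_add_one h.ge; omega)

theorem head?_lamL (g : Gx X) : (lamL g).head? = some gone := by
  fun_induction lamL g with
  | case1 g _ ih => simp [List.head?_append, ih]
  | case2 g _ h => simp [eq_gone_of_ht_eq_zero h]
  | case3 => rfl

theorem getLast?_lamL (g : Gx X) : (lamL g).getLast? = some g := by
  fun_induction lamL g <;> simp

theorem lamL_ne_nil_s1 (g : Gx X) : lamL g ≠ [] :=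
  List.ne_nil_of_mem (List.mem_of_getLast? (getLast?_lamL g))

theorem isChain_stepUp_lamL (g : Gx X) : (lamL g).IsChain stepUp := by
  fun_induction lamL g with
  | case1 g hg ih =>
    refine List.isChain_append.2 ⟨ih, List.isChain_pair.2 (.inl rfl), ?_⟩
    simpa [getLast?_lamL] using stepUp_c_l hg
  | case2 => exact .singleton _
  | case3 g => exact List.isChain_pair.2 (.inl (l_eq_gone_of_ht_eq_one (by omega)).symm)

theorem listCls_lamL (g : Gx X) : listCls (lamL g) = g.toFT1 := by
  fun_induction lamL g with
  | case1 g hg ih =>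
    rw [listCls_append, ih, listCls_cons, listCls_singleton, ← mul_assoc,
      c_toFT1_mul_l_mul_self hg]
  | case2 g => exact listCls_singleton g
  | case3 g => rw [listCls_cons, listCls_singleton, gone_toFT1_mul]

theorem head?_lamR (g : Gx X) : (lamR g).head? = some g := by
  fun_induction lamR g <;> simp

theorem getLast?_lamR (g : Gx X) : (lamR g).getLast? = some gone := by
  fun_induction lamR g with
  | case1 g _ ih =>
    rw [List.getLast?_append_of_ne_nil _ (List.ne_nil_of_mem (List.mem_of_getLast? ih)), ih]
  | case2 g _ h => simp [eq_gone_of_ht_eq_zero h]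
  | case3 => rfl

theorem lamR_ne_nil (g : Gx X) : lamR g ≠ [] :=
  List.ne_nil_of_mem (List.mem_of_getLast? (getLast?_lamR g))

theorem isChain_stepDown_lamR (g : Gx X) : (lamR g).IsChain stepDown := by
  fun_induction lamR g with
  | case1 g hg ih =>
    refine List.isChain_append.2 ⟨List.isChain_pair.2 (.inr rfl), ih, ?_⟩
    simpa [head?_lamR] using stepDown_r_c hg
  | case2 => exact .singleton _
  | case3 g => exact List.isChain_pair.2 (.inl (l_eq_gone_of_ht_eq_one (by omega)).symm)

theorem listCls_lamR (g : Gx X) : listCls (lamR g) = g.toFT1 := by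
  fun_induction lamR g with
  | case1 g hg ih =>
    rw [List.cons_append, List.cons_append, List.nil_append, listCls_cons, listCls_cons, ih,
      ← mul_assoc, toFT1_mul_r_mul_c hg]
  | case2 g => exact listCls_singleton g
  | case3 g => rw [listCls_cons, listCls_singleton, toFT1_mul_gone]

end Gx

section Beta1

variable {X : Type}

theorem isMountainRangeL_beta1g (g : Gx X) : IsMountainRangeL (beta1g g) := by
  have hL : IsLandL (Gx.lamL g) :=
    ⟨Gx.lamL_ne_nil_s1 g, (Gx.isChain_stepUp_lamL g).imp fun _ _ => .inl⟩
  have hR : IsLandL (Gx.lamR g) :=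
    ⟨Gx.lamR_ne_nil g, (Gx.isChain_stepDown_lamR g).imp fun _ _ => .inr⟩
  have h : (Gx.lamL g).getLast? = (Gx.lamR g).head? := by
    rw [Gx.getLast?_lamL, Gx.head?_lamR]
  exact ⟨hL.mergeL hR h, (head?_mergeL _ hL.1).trans (Gx.head?_lamL g),
    (getLast?_mergeL h).trans (Gx.getLast?_lamR g)⟩

theorem listCls_beta1g (g : Gx X) : listCls (beta1g g) = g.toFT1 := by
  rw [beta1g, listCls_mergeL (by rw [Gx.getLast?_lamL, Gx.head?_lamR]) (Gx.lamR_ne_nil g),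
    Gx.listCls_lamL, Gx.listCls_lamR, Gx.toFT1_mul_self]

theorem isMountainRangeL_beta1L : ∀ {w : List (Gx X)}, w ≠ [] → IsMountainRangeL (beta1L w)
  | [g], _ => isMountainRangeL_beta1g g
  | g :: h :: w, _ =>
    (isMountainRangeL_beta1g g).mergeL (isMountainRangeL_beta1L (List.cons_ne_nil h w))

theorem listCls_beta1L : ∀ w : List (Gx X), listCls (beta1L w) = listCls w
  | [] => rfl
  | [g] => (listCls_beta1g g).trans (listCls_singleton g).symm
  | g :: h :: w => by
    have hg := isMountainRangeL_beta1g g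
    have hw := isMountainRangeL_beta1L (List.cons_ne_nil h w)
    change listCls (mergeL (beta1g g) (beta1L (h :: w))) = _
    rw [listCls_mergeL (hg.2.2.trans hw.2.1.symm) hw.1.1, listCls_beta1g,
      listCls_beta1L (h :: w)]
    rfl

end Beta1

theorem Relation.exists_reflTransGen_of_measure {α : Type*} {r : α → α → Prop} {P Q : α → Prop}
    (f : α → ℕ) (step : ∀ a, P a → ¬Q a → ∃ b, r a b ∧ P b ∧ f b < f a) {a : α} (ha : P a) :
    ∃ b, ReflTransGen r a b ∧ P b ∧ Q b := by
  induction hn : f a using Nat.strong_induction_on generalizing a with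
  | _ n ih =>
    by_cases hq : Q a
    · exact ⟨a, .refl, ha, hq⟩
    obtain ⟨b, hab, hb, hlt⟩ := step a ha hq
    obtain ⟨c, hbc, hc⟩ := ih (f b) (hn ▸ hlt) hb rfl
    exact ⟨c, .head hab hbc, hc⟩

section Uplifting

variable {X : Type}

theorem ht_le_of_isChain {a : Gx X} {t : List (Gx X)} (h : (a :: t).IsChain Gx.stepLand) :
    ∀ g ∈ a :: t, g.ht ≤ a.ht + t.length := by
  induction t generalizing a with
  | nil => simp
  | cons b t ih =>
    rw [List.isChain_cons_cons] at h
    have hab := h.1.ht_le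
    rintro g (_ | ⟨_, hg⟩)
    · simp
    · have := ih h.2 g hg
      simp only [List.length_cons]
      omega

theorem IsMountainRangeL.ht_lt_length {w : List (Gx X)} (hw : IsMountainRangeL w) :
    ∀ g ∈ w, g.ht < w.length := by
  obtain ⟨t, rfl⟩ : ∃ t, w = Gx.gone :: t := ⟨w.tail, (List.cons_head?_tail hw.2.1).symm⟩
  intro g hg
  have := ht_le_of_isChain hw.1.2 g hg
  have hgone : (Gx.gone : Gx X).ht = 0 := rfl
  simp only [List.length_cons]
  omega

theorem exists_river_of_not_riverFreeL : ∀ {w : List (Gx X)}, ¬RiverFreeL w →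
    ∃ p a b c s, w = p ++ a :: b :: c :: s ∧ a.ht = b.ht + 1 ∧ c.ht = b.ht + 1
  | a :: b :: c :: t, h => by
    by_cases hr : a.ht = b.ht + 1 ∧ c.ht = b.ht + 1
    · exact ⟨[], a, b, c, t, rfl, hr⟩
    · obtain ⟨p, a', b', c', s, hw, hr'⟩ := exists_river_of_not_riverFreeL fun h' => h ⟨hr, h'⟩
      exact ⟨a :: p, a', b', c', s, by rw [hw, List.cons_append], hr'⟩
  | [], h | [_], h | [_, _], h => (h trivial).elim

theorem exists_upStep_of_not_riverFreeL {w : List (Gx X)} (hw : IsLandL w) (h : ¬RiverFreeL w) :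
    ∃ v, UpStep w v := by
  obtain ⟨p, a, b, c, s, rfl, ha, hc⟩ := exists_river_of_not_riverFreeL h
  by_cases hac : a = c
  · exact ⟨_, p, s, a, b, c, rfl, ha, hc, .inl ⟨hac, rfl⟩⟩
  · obtain ⟨-, hab, hbc, -⟩ := by simpa using hw.isChain
    obtain ⟨d, hd⟩ := Gx.exists_val_eq_node hac ha hc (hab.stepDown_of_ht_eq ha)
      (hbc.stepUp_of_ht_eq hc)
    exact ⟨_, p, s, a, b, c, rfl, ha, hc, .inr ⟨hac, d, hd, rfl⟩⟩

namespace UpStep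

variable {w v : List (Gx X)}

theorem isLandL (h : UpStep w v) (hw : IsLandL w) : IsLandL v := by
  obtain ⟨p, s, a, b, c, rfl, ha, hc, ⟨rfl, rfl⟩ | ⟨-, d, hd, rfl⟩⟩ := h <;>
    obtain ⟨hp, -, -, hs⟩ := by simpa using hw.isChain
  · exact ⟨by simp, List.isChain_split.2 ⟨hp, hs⟩⟩
  · refine ⟨by simp, List.isChain_append_cons_cons.2 ⟨hp, ?_, List.isChain_cons_cons.2 ⟨?_, hs⟩⟩⟩
    · exact .inl (.inr (Gx.r_eq_of_val_eq_node hd).symm)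
    · exact .inr (.inl (Gx.l_eq_of_val_eq_node hd).symm)

theorem head?_eq (h : UpStep w v) : v.head? = w.head? := by
  obtain ⟨p, s, a, b, c, rfl, -, -, ⟨rfl, rfl⟩ | ⟨-, d, -, rfl⟩⟩ := h <;> simp [List.head?_append]

theorem getLast?_eq (h : UpStep w v) : v.getLast? = w.getLast? := by
  obtain ⟨p, s, a, b, c, rfl, -, -, ⟨rfl, rfl⟩ | ⟨-, d, -, rfl⟩⟩ := h <;>
    simp [List.getLast?_append, List.getLast?_cons_cons]

theorem isMountainRangeL (h : UpStep w v) (hw : IsMountainRangeL w) : IsMountainRangeL v :=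
  ⟨h.isLandL hw.1, h.head?_eq ▸ hw.2.1, h.getLast?_eq ▸ hw.2.2⟩

theorem listCls_eq (h : UpStep w v) (hw : IsLandL w) : listCls v = listCls w := by
  obtain ⟨p, s, a, b, c, rfl, ha, hc, ⟨rfl, rfl⟩ | ⟨-, d, hd, rfl⟩⟩ := h <;>
    rw [listCls_append, listCls_append] <;> congr 1 <;> simp only [listCls_cons, ← mul_assoc]
  · obtain ⟨-, hab, -, -⟩ := by simpa using hw.isChain
    rw [Gx.toFT1_mul_mul_self_of_stepDown (hab.stepDown_of_ht_eq ha) ha]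
  · rw [Gx.toFT1_mul_mul_of_val_eq_node hd (by omega)]

theorem length_le (h : UpStep w v) : v.length ≤ w.length := by
  obtain ⟨p, s, a, b, c, rfl, -, -, ⟨rfl, rfl⟩ | ⟨-, d, -, rfl⟩⟩ := h <;> simp

end UpStep

def heightDeficit (N : ℕ) (w : List (Gx X)) : ℕ := (w.map fun g => N - g.ht).sum

theorem UpStep.heightDeficit_lt {N : ℕ} {w v : List (Gx X)} (h : UpStep w v)
    (hw : ∀ g ∈ w, g.ht < N) : heightDeficit N v < heightDeficit N w := by
  obtain ⟨p, s, a, b, c, rfl, -, hc, ⟨rfl, rfl⟩ | ⟨-, d, hd, rfl⟩⟩ := h <;>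
    simp only [heightDeficit, List.map_append, List.map_cons, List.sum_append, List.sum_cons]
  · have := hw a (by simp)
    omega
  · have := hw c (by simp)
    have := Gx.ht_eq_of_val_eq_node hd
    omega

theorem UpStar.isMountainRangeL {w v : List (Gx X)} (h : UpStar w v) (hw : IsMountainRangeL w) :
    IsMountainRangeL v := by
  induction h with
  | refl => exact hw
  | tail _ hstep ih => exact hstep.isMountainRangeL ih

theorem UpStar.listCls_eq {w v : List (Gx X)} (h : UpStar w v) (hw : IsMountainRangeL w) :
    listCls v = listCls w := by
  induction h with
  | refl => rfl
  | tail hwu hstep ih => rw [hstep.listCls_eq (UpStar.isMountainRangeL hwu hw).1, ih]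

theorem exists_upStar_riverFreeL {w : List (Gx X)} (hw : IsMountainRangeL w) :
    ∃ v, UpStar w v ∧ RiverFreeL v ∧ IsLandL v := by
  obtain ⟨v, hwv, ⟨hv, -⟩, hrf⟩ := Relation.exists_reflTransGen_of_measure
    (P := fun v => IsMountainRangeL v ∧ v.length ≤ w.length) (Q := RiverFreeL)
    (heightDeficit w.length) (fun v ⟨hv, hlen⟩ hrf => by
      obtain ⟨v', hvv'⟩ := exists_upStep_of_not_riverFreeL hv.1 hrf
      exact ⟨v', hvv', ⟨hvv'.isMountainRangeL hv, hvv'.length_le.trans hlen⟩,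
        hvv'.heightDeficit_lt fun g hg => (hv.ht_lt_length g hg).trans_le hlen⟩)
    ⟨hw, le_rfl⟩
  exact ⟨v, hwv, hrf, hv.1⟩

theorem upStar_beta2L {w : List (Gx X)} (hw : IsMountainRangeL w) :
    UpStar w (beta2L w) ∧ RiverFreeL (beta2L w) := by
  have hex := exists_upStar_riverFreeL hw
  rw [beta2L, dif_pos hex]
  exact ⟨hex.choose_spec.1, hex.choose_spec.2.1⟩

theorem isMountainL_beta2L {w : List (Gx X)} (hw : IsMountainRangeL w) :
    IsMountainL (beta2L w) :=
  have hr := UpStar.isMountainRangeL (upStar_beta2L hw).1 hw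
  ⟨hr.1, hr.2.1, hr.2.2, (upStar_beta2L hw).2⟩

theorem listCls_beta2L {w : List (Gx X)} (hw : IsMountainRangeL w) :
    listCls (beta2L w) = listCls w :=
  UpStar.listCls_eq (upStar_beta2L hw).1 hw

end Uplifting

theorem statement1_general {X : Type} (u : Wd X) :
    IsMountainL (betaL (Wd.toL u)) ∧ cls (Wd.ofL (betaL (Wd.toL u))) = cls u := by
  have hu : Wd.toL u ≠ [] := List.cons_ne_nil _ _
  have hβ₁ := isMountainRangeL_beta1L hu
  have hβ := isMountainL_beta2L hβ₁
  refine ⟨hβ, ?_⟩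
  rw [betaL, cls_ofL hβ.1.1, listCls_beta2L hβ₁, listCls_beta1L, ← cls_ofL hu]
  rfl

theorem statement1 {X : Type} [Nonempty X] (u : Wd X) :
    IsMountainL (betaL (Wd.toL u)) ∧ cls (Wd.ofL (betaL (Wd.toL u))) = cls u :=
  statement1_general u
end

section
/- If u = g_0 g_1 ⋯ g_n is a downhill in G(X)^+, then u·(reverse of u) ≈ g_0 in FT¹(X), where the reverse of g_0⋯g_n is the word g_n⋯g_0. -/
/-!
Induct on the length of the downhill: if `u = g₀ v` with `v` a downhill starting at `g₁`, then
`u · rev(u) = g₀ (v · rev(v)) g₀ ≈ g₀ g₁ g₀`, so everything reduces to `g₀ g₁ g₀ ≈ g₀` whenever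
`g₁ ∈ {g₀ˡ, g₀ʳ}`. For `⋏(g) ≤ 1` this is `g 1 g ≈ g`. For `⋏(g) ≥ 2` the three relations of
`ρ_s` give `g (gʳ g^c gˡ) g ≈ (g gʳ g^c) g (g^c gˡ g) ≈ g`, and inserting `g^c gˡ g ≈ g` or
`g gʳ g^c ≈ g` next to `gʳ` or `gˡ` yields `g gʳ g ≈ g` and `g gˡ g ≈ g`.
-/

theorem mul_left_mul_self_and_mul_right_mul_self {S : Type*} [Semigroup S] {a l c r : S}
    (ha : a * a = a) (hcla : c * l * a = a) (harc : a * r * c = a)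
    (hrcacl : r * c * a * c * l = r * c * l) : a * l * a = a ∧ a * r * a = a := by
  have key : a * (r * c * l) * a = a := calc
    a * (r * c * l) * a = a * (r * c * a * c * l) * a := by rw [hrcacl]
    _ = (a * r * c) * a * (c * l * a) := by simp only [mul_assoc]
    _ = a := by rw [harc, hcla, ha, ha]
  constructor
  · calc a * l * a = (a * r * c) * l * a := by rw [harc]
      _ = a * (r * c * l) * a := by simp only [mul_assoc]
      _ = a := key
  · calc a * r * a = a * r * (c * l * a) := by rw [hcla]
      _ = a * (r * c * l) * a := by simp only [mul_assoc]
      _ = a := key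

namespace Gx

variable {X : Type}

theorem l_eq_gone_and_r_eq_gone_of_ht_lt_two {g : Gx X} (h : g.ht < 2) :
    g.l = gone ∧ g.r = gone := by
  obtain ⟨g, hg⟩ := g
  cases hg with
  | one => exact ⟨rfl, rfl⟩
  | base _ => exact ⟨rfl, rfl⟩
  | node _ _ _ hl => simp only [ht, PreG.ht] at h; omega

end Gx

namespace Wd

variable {X : Type}

theorem ofL_cons_append_singleton (a b : Gx X) {w : List (Gx X)} (hw : w ≠ []) :
    ofL (a :: (w ++ [b])) = og a * ofL w * og b := by
  obtain ⟨x, t, rfl⟩ := List.exists_cons_of_ne_nil hw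
  change (⟨a, x :: t ++ [b]⟩ : Wd X) = ⟨a, ([] ++ x :: t) ++ [b]⟩
  simp

end Wd

section Downhill

variable {X : Type}

theorem cls_og_mul_self (g : Gx X) : cls (Wd.og g) * cls (Wd.og g) = cls (Wd.og g) :=
  cls_eq_of_rhoBase (.inl ⟨g, .inr (.inr ⟨rfl, rfl⟩)⟩)

theorem cls_og_mul_og_mul_og_of_stepDown {a b : Gx X} (h : Gx.stepDown a b) :
    cls (Wd.og a) * cls (Wd.og b) * cls (Wd.og a) = cls (Wd.og a) := by
  by_cases ha : 2 ≤ a.ht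
  · have hsandwich := mul_left_mul_self_and_mul_right_mul_self
      (l := cls (Wd.og a.l)) (c := cls (Wd.og a.c)) (r := cls (Wd.og a.r)) (cls_og_mul_self a)
      (cls_eq_of_rhoBase (.inr ⟨a, ha, .inl ⟨rfl, rfl⟩⟩))
      (cls_eq_of_rhoBase (.inr ⟨a, ha, .inr (.inl ⟨rfl, rfl⟩)⟩))
      (cls_eq_of_rhoBase (.inr ⟨a, ha, .inr (.inr ⟨rfl, rfl⟩)⟩))
    rcases h with rfl | rfl
    exacts [hsandwich.1, hsandwich.2]
  · have hb : b = Gx.gone := by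
      have := Gx.l_eq_gone_and_r_eq_gone_of_ht_lt_two (not_le.mp ha)
      rcases h with rfl | rfl
      exacts [this.1, this.2]
    have ha1 : cls (Wd.og a) * cls (Wd.og Gx.gone) = cls (Wd.og a) :=
      cls_eq_of_rhoBase (.inl ⟨a, .inr (.inl ⟨rfl, rfl⟩)⟩)
    rw [hb, ha1, cls_og_mul_self]

theorem cls_ofL_cons_append_reverse (a : Gx X) (m : List (Gx X))
    (h : (a :: m).IsChain Gx.stepDown) :
    cls (Wd.ofL (a :: m ++ (a :: m).reverse)) = cls (Wd.og a) := by
  induction m generalizing a with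
  | nil => exact cls_og_mul_self a
  | cons b m ih =>
    obtain ⟨hab, hm⟩ := List.isChain_cons_cons.mp h
    have hword : a :: b :: m ++ (a :: b :: m).reverse =
        a :: (b :: m ++ (b :: m).reverse ++ [a]) := by
      simp
    rw [hword, Wd.ofL_cons_append_singleton a a (by simp)]
    change cls (Wd.og a) * cls (Wd.ofL (b :: m ++ (b :: m).reverse)) * cls (Wd.og a) = _
    rw [ih b hm, cls_og_mul_og_mul_og_of_stepDown hab]

end Downhill

theorem statement2_general {X : Type} (l : List (Gx X)) (hl : IsDownhillL l)
    (a : Gx X) (ha : l.head? = some a) :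
    cls (Wd.ofL (l ++ l.reverse)) = cls (Wd.og a) := by
  cases l with
  | nil => simp at ha
  | cons b m =>
    obtain rfl : b = a := by simpa using ha
    exact cls_ofL_cons_append_reverse b m hl.2

theorem statement2 {X : Type} [Nonempty X] (l : List (Gx X)) (hl : IsDownhillL l)
    (a : Gx X) (ha : l.head? = some a) :
    cls (Wd.ofL (l ++ l.reverse)) = cls (Wd.og a) :=
  statement2_general l hl a ha
end

section
/- Let g, h ∈ G(X). Then: (i) h ∈ ε(g) if and only if ε(h) ⊆ ε(g); (ii) if h ∈ ε(g) ∖ {g}, then there exists an uphill u = g_0⋯g_n with n = ⋏(g) − ⋏(h), g_i ∈ ε(g) for all 0 ≤ i ≤ n, g_0 = h and g_n = g. -/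
/-! The ground satisfies `ε(g) = ε(g^l) ∪ {g} ∪ ε(g^r)`, so both parts go by induction on `g`.
For (ii), an uphill from `h ∈ ε(g^l)` to `g^l` (or from `h ∈ ε(g^r)` to `g^r`) is extended by the
single step to `g`; every step raises the height by one, which gives the length. -/

namespace PreG

variable {X : Type}

theorem mem_ground_self (g : PreG X) : g ∈ g.ground := by
  cases g <;> simp [ground]

theorem ground_subset_of_mem {g h : PreG X} (hm : h ∈ g.ground) : h.ground ⊆ g.ground := by
  induction g with
  | one =>
    rw [ground, Set.mem_singleton_iff] at hm
    rw [hm]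
  | base x =>
    rcases hm with rfl | rfl
    · simp [ground]
    · rfl
  | node l c r ihl _ ihr =>
    rcases hm with (hm | rfl) | hm
    · exact (ihl hm).trans (Set.subset_union_left.trans Set.subset_union_left)
    · rfl
    · exact (ihr hm).trans Set.subset_union_right

theorem mem_ground_iff_ground_subset {g h : PreG X} : h ∈ g.ground ↔ h.ground ⊆ g.ground :=
  ⟨ground_subset_of_mem, fun hs => hs (mem_ground_self h)⟩

end PreG

namespace Gx

variable {X : Type}

-- An uphill from `h` to `g` inside `ε(g)`; its length is stated additively to avoid truncated
-- subtraction.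
def IsGroundUphill (h g : Gx X) (w : List (Gx X)) : Prop :=
  IsUphillL w ∧ w.length + h.ht = g.ht + 1 ∧ (∀ a ∈ w, a.1 ∈ g.1.ground) ∧
    w.head? = some h ∧ w.getLast? = some g

theorem isGroundUphill_singleton (g : Gx X) : IsGroundUphill g g [g] :=
  ⟨⟨List.cons_ne_nil _ _, List.isChain_singleton _⟩, by simp [Nat.add_comm],
    by simpa using PreG.mem_ground_self g.1, rfl, rfl⟩

theorem IsGroundUphill.snoc {h k g : Gx X} {w : List (Gx X)} (hw : IsGroundUphill h k w)
    (hkg : stepUp k g) (hsub : k.1.ground ⊆ g.1.ground) (hht : k.ht + 1 = g.ht) :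
    IsGroundUphill h g (w ++ [g]) := by
  obtain ⟨⟨-, hchain⟩, hlen, hmem, hhead, hlast⟩ := hw
  refine ⟨⟨by simp, hchain.append (List.isChain_singleton g) ?_⟩, ?_, ?_, ?_, by simp⟩
  · simp only [hlast, Option.mem_def, Option.some.injEq, List.head?_cons]
    rintro _ rfl _ rfl
    exact hkg
  · simp only [List.length_append, List.length_singleton]
    omega
  · simp only [List.mem_append, List.mem_singleton]
    rintro a (ha | rfl)
    · exact hsub (hmem a ha)
    · exact PreG.mem_ground_self _
  · rw [List.head?_append, hhead]
    rfl

theorem exists_isGroundUphill_of_mem_ground {g : PreG X} (hg : g.IsG) :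
    ∀ h : Gx X, h.1 ∈ g.ground → ∃ w, IsGroundUphill h ⟨g, hg⟩ w := by
  induction hg with
  | one =>
    intro h hm
    obtain rfl : h = gone := Subtype.ext hm
    exact ⟨_, isGroundUphill_singleton _⟩
  | base x =>
    rintro h (hm | hm)
    · obtain rfl : h = gone := Subtype.ext hm
      exact ⟨_, (isGroundUphill_singleton gone).snoc (g := ofX x) (Or.inl rfl)
        (fun _ ha => Or.inl ha) rfl⟩
    · obtain rfl : h = ofX x := Subtype.ext hm
      exact ⟨_, isGroundUphill_singleton _⟩
  | @node l c r hl hc hr hl_pos hlr hcl_ht hne hcl hcr ihl _ ihr =>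
    rintro h ((hm | hm) | hm)
    · obtain ⟨w, hw⟩ := ihl h hm
      exact ⟨_, hw.snoc (Or.inl rfl) (Set.subset_union_left.trans Set.subset_union_left) rfl⟩
    · obtain rfl : h = ⟨_, .node hl hc hr hl_pos hlr hcl_ht hne hcl hcr⟩ := Subtype.ext hm
      exact ⟨_, isGroundUphill_singleton _⟩
    · obtain ⟨w, hw⟩ := ihr h hm
      exact ⟨_, hw.snoc (Or.inr rfl) Set.subset_union_right
        (by simp only [ht, PreG.ht] at hlr ⊢; omega)⟩

end Gx

theorem statement6_general {X : Type} (g h : Gx X) :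
    (h.1 ∈ PreG.ground g.1 ↔ PreG.ground h.1 ⊆ PreG.ground g.1) ∧
    (h.1 ∈ PreG.ground g.1 → h ≠ g →
      ∃ w : List (Gx X), IsUphillL w ∧ w.length = g.ht - h.ht + 1 ∧
        (∀ a ∈ w, a.1 ∈ PreG.ground g.1) ∧ w.head? = some h ∧ w.getLast? = some g) := by
  refine ⟨PreG.mem_ground_iff_ground_subset, fun hm _ => ?_⟩
  obtain ⟨w, hup, hlen, hmem, hhead, hlast⟩ : ∃ w, Gx.IsGroundUphill h g w :=
    Gx.exists_isGroundUphill_of_mem_ground g.2 h hm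
  have hpos : 0 < w.length := List.length_pos_of_ne_nil hup.1
  exact ⟨w, hup, by omega, hmem, hhead, hlast⟩

theorem statement6 {X : Type} [Nonempty X] (g h : Gx X) :
    (h.1 ∈ PreG.ground g.1 ↔ PreG.ground h.1 ⊆ PreG.ground g.1) ∧
    (h.1 ∈ PreG.ground g.1 → h ≠ g →
      ∃ w : List (Gx X), IsUphillL w ∧ w.length = g.ht - h.ht + 1 ∧
        (∀ a ∈ w, a.1 ∈ PreG.ground g.1) ∧ w.head? = some h ∧ w.getLast? = some g) :=
  statement6_general g h
end
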